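/- arXiv:1711.05399 — 10 statements merged into one kernel-verified Lean document; each statement's English description precedes it below -/
import Mathlib

section
/- Let R be an integral domain and F a localizing system of finite type on R. Define ν_F : Ideal(R) → ℕ∞ by ν_F(R) = ∞, ν_F(I) = 1 if I is a nonzero proper ideal of R belonging to F, and ν_F(I) = 0 otherwise. Then ν_F is an ideal valuation on R. -/
/-- An ideal valuation on an integral domain `R`. -/
def IsIdealValuation (R : Type*) [CommRing R] (ν : Ideal R → ℕ∞) : Prop :=
  ν ⊥ = 0 ∧ ν ⊤ = ⊤ ∧
  (∀ I J : Ideal R, min (ν I) (ν J) ≤ ν (I * J)) ∧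
  (∀ I : Ideal R, ν I = ⨆ (J : Ideal R) (_ : J ≤ I) (_ : J.FG), ν J)

/-- A localizing system on an integral domain `R`. -/
def IsLocalizingSystem (R : Type*) [CommRing R] (F : Set (Ideal R)) : Prop :=
  F.Nonempty ∧
  (∀ I ∈ F, ∀ J : Ideal R, I ≤ J → J ∈ F) ∧
  (∀ I ∈ F, ∀ J : Ideal R, (∀ i ∈ I, Submodule.colon J (Ideal.span {i}) ∈ F) → J ∈ F)

/-- A family of ideals is of finite type if every member contains a finitely generated member. -/
def IsFiniteTypeLS (R : Type*) [CommRing R] (F : Set (Ideal R)) : Prop :=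
  ∀ I ∈ F, ∃ J ∈ F, J ≤ I ∧ J.FG

lemma LS_mul_mem {R : Type*} [CommRing R] {F : Set (Ideal R)}
    (hF : IsLocalizingSystem R F) {I J : Ideal R} (hI : I ∈ F) (hJ : J ∈ F) :
    I * J ∈ F := by
  obtain ⟨-, hup, hcolon⟩ := hF
  refine hcolon I hI (I * J) (fun i hi => ?_)
  refine hup J hJ _ (fun j hj => ?_)
  rw [Ideal.mem_colon_span_singleton, mul_comm j i]
  exact Ideal.mul_mem_mul hi hj

open Classical in
theorem idealValuation_of_finiteType_localizingSystem
    (R : Type*) [CommRing R] [IsDomain R] (F : Set (Ideal R))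
    (hF : IsLocalizingSystem R F) (hft : IsFiniteTypeLS R F) :
    IsIdealValuation R
      (fun I => if I = ⊤ then ⊤ else if I ∈ F ∧ I ≠ ⊥ then 1 else 0) := by
  have hbt : (⊥ : Ideal R) ≠ ⊤ := bot_ne_top
  refine ⟨?_, ?_, ?_, ?_⟩
  · simp [hbt]
  · simp
  · intro I J
    simp only
    by_cases hI : I = ⊤
    · subst hI
      by_cases hJ : J = ⊤ <;> simp [hJ, Ideal.top_mul]
    · by_cases hJ : J = ⊤
      · subst hJ
        simp [hI, Ideal.mul_top]
      · by_cases hI' : I ∈ F ∧ I ≠ ⊥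
        · by_cases hJ' : J ∈ F ∧ J ≠ ⊥
          · have hmem : I * J ∈ F := LS_mul_mem hF hI'.1 hJ'.1
            have hne : I * J ≠ ⊥ := mul_ne_zero hI'.2 hJ'.2
            by_cases hIJ : I * J = ⊤
            · simp [hI, hJ, hIJ]
            · simp only [if_neg hI, if_neg hJ, if_neg hIJ]
              rw [if_pos (⟨hmem, hne⟩ : I * J ∈ F ∧ I * J ≠ ⊥),
                if_pos (⟨hI'.1, hI'.2⟩ : I ∈ F ∧ I ≠ ⊥),
                if_pos (⟨hJ'.1, hJ'.2⟩ : J ∈ F ∧ J ≠ ⊥), min_self]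
          · simp [hI, hJ, hJ']
        · simp [hI, hJ, hI']
  · intro I
    simp only
    by_cases hI : I = ⊤
    · subst hI
      rw [if_pos rfl, eq_comm, eq_top_iff]
      refine le_iSup_of_le ⊤ (le_iSup_of_le le_rfl (le_iSup_of_le ⟨{1}, by simp⟩ ?_))
      simp
    · rw [if_neg hI]
      by_cases hI' : I ∈ F ∧ I ≠ ⊥
      · rw [if_pos hI']
        apply le_antisymm
        · -- find fg nonzero member of F below I
          obtain ⟨J, hJF, hJI, hJfg⟩ := hft I hI'.1
          by_cases hJb : J = ⊥
          · -- then ⊥ ∈ F, so every ideal is in F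
            obtain ⟨x, hxI, hx⟩ := Submodule.exists_mem_ne_zero_of_ne_bot hI'.2
            have hall : Ideal.span {x} ∈ F := hF.2.1 ⊥ (hJb ▸ hJF) _ bot_le
            have hne : Ideal.span {x} ≠ ⊥ := by
              simpa [Ideal.span_singleton_eq_bot] using hx
            have hle : Ideal.span {x} ≤ I := by
              rwa [Ideal.span_singleton_le_iff_mem]
            have hnt : Ideal.span {x} ≠ ⊤ := fun h => hI (top_le_iff.mp (h ▸ hle))
            refine le_iSup_of_le (Ideal.span {x})
              (le_iSup_of_le hle (le_iSup_of_le ⟨{x}, by simp⟩ ?_))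
            simp [hnt, hall, hne]
          · have hnt : J ≠ ⊤ := fun h => hI (top_le_iff.mp (h ▸ hJI))
            refine le_iSup_of_le J (le_iSup_of_le hJI (le_iSup_of_le hJfg ?_))
            simp [hnt, hJF, hJb]
        · refine iSup_le fun J => iSup_le fun hJI => iSup_le fun _ => ?_
          have hnt : J ≠ ⊤ := fun h => hI (top_le_iff.mp (h ▸ hJI))
          rw [if_neg hnt]
          split <;> simp
      · rw [if_neg hI', eq_comm]
        rw [not_and_or] at hI'
        refine le_antisymm (iSup_le fun J => iSup_le fun hJI => iSup_le fun _ => ?_) bot_le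
        have hnt : J ≠ ⊤ := fun h => hI (top_le_iff.mp (h ▸ hJI))
        rw [if_neg hnt, if_neg]
        rintro ⟨hJF, hJb⟩
        rcases hI' with h | h
        · exact h (hF.2.1 J hJF I hJI)
        · rw [not_not] at h
          exact hJb (le_bot_iff.mp (h ▸ hJI))
end

section
/- If ν is an ideal valuation on an integral domain R, then ν(I) = ν(√I) for every ideal I of R, where √I denotes the radical of I. -/
theorem idealValuation_radical
    (R : Type*) [CommRing R] [IsDomain R] (ν : Ideal R → ℕ∞)
    (hν : IsIdealValuation R ν) (I : Ideal R) :
    ν I = ν I.radical := by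
  obtain ⟨h0, htop, hmul, hsup⟩ := hν
  have hmono : ∀ J K : Ideal R, J ≤ K → ν J ≤ ν K := by
    intro J K hJK
    rw [hsup J, hsup K]
    exact iSup_le fun L => iSup_le fun hL => iSup_le fun hfg =>
      le_iSup_of_le L (le_iSup_of_le (hL.trans hJK) (le_iSup_of_le hfg le_rfl))
  have hpow : ∀ (J : Ideal R) (n : ℕ), ν J ≤ ν (J ^ (n + 1)) := by
    intro J n
    induction n with
    | zero => simp
    | succ n ih =>
        have : min (ν (J ^ (n + 1))) (ν J) ≤ ν (J ^ (n + 1) * J) := hmul _ _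
        rw [← pow_succ] at this
        exact le_trans (le_min ih le_rfl) this
  refine le_antisymm (hmono _ _ Ideal.le_radical) ?_
  rw [hsup I.radical]
  refine iSup_le fun J => iSup_le fun hJ => iSup_le fun hfg => ?_
  obtain ⟨n, hn⟩ := Ideal.exists_pow_le_of_le_radical_of_fg hJ hfg
  cases n with
  | zero =>
      simp only [pow_zero, Ideal.one_eq_top] at hn
      have : I = ⊤ := top_le_iff.mp hn
      rw [this, htop]; exact le_top
  | succ n => exact (hpow J n).trans (hmono _ _ hn)
end

section
/- Let R be an integral domain, let fS(R) denote the set of finitely generated ideals of R, and let ν : fS(R) → ℕ∞ be a function satisfying: ν(0) = 0 and ν(R) = ∞; min{ν(I), ν(J)} ≤ ν(IJ) for all I, J ∈ fS(R); and ν(I) = sup{ν(J) : J ⊆ I, J ∈ fS(R)} for all I ∈ fS(R). Then there is a unique ideal valuation ν̃ on R with ν̃(J) = ν(J) for every finitely generated ideal J of R, and it is given by ν̃(I) = sup{ν(J) : J ⊆ I, J ∈ fS(R)}. -/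
theorem Ideal.iSup_fg_le_eq_iSup_subtype {R α : Type*} [CommRing R] [CompleteLattice α]
    (f : Ideal R → α) (I : Ideal R) :
    ⨆ (J : Ideal R) (_ : J ≤ I) (_ : J.FG), f J = ⨆ (J : {J : Ideal R // J.FG}) (_ : J.1 ≤ I), f J.1 :=
  le_antisymm
    (iSup₂_le fun J hJ => iSup_le fun hfg => le_iSup₂_of_le ⟨J, hfg⟩ hJ le_rfl)
    (iSup₂_le fun J hJ => le_iSup₂_of_le J.1 hJ (le_iSup_of_le J.2 le_rfl))

namespace IsIdealValuation

variable {R : Type*} [CommRing R]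

noncomputable def fgExtension (ν : {J : Ideal R // J.FG} → ℕ∞) (I : Ideal R) : ℕ∞ :=
  ⨆ (J : {J : Ideal R // J.FG}) (_ : J.1 ≤ I), ν J

variable {ν : {J : Ideal R // J.FG} → ℕ∞}

theorem fgExtension_coe (hsup : ∀ I, ν I = ⨆ (J : {J : Ideal R // J.FG}) (_ : J.1 ≤ I.1), ν J)
    (J : {J : Ideal R // J.FG}) : fgExtension ν J.1 = ν J :=
  (hsup J).symm

theorem fgExtension_bot (h0 : ∀ J : {J : Ideal R // J.FG}, J.1 = ⊥ → ν J = 0) :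
    fgExtension ν ⊥ = 0 :=
  nonpos_iff_eq_zero.mp <| iSup₂_le fun J hJ => (h0 J (le_bot_iff.mp hJ)).le

theorem fgExtension_top (htop : ∀ J : {J : Ideal R // J.FG}, J.1 = ⊤ → ν J = ⊤) :
    fgExtension ν ⊤ = ⊤ :=
  top_le_iff.mp <| le_iSup₂_of_le ⟨⊤, Ideal.fg_top R⟩ le_rfl (htop _ rfl).ge

theorem min_fgExtension_le_mul
    (hmul : ∀ I J L : {J : Ideal R // J.FG}, L.1 = I.1 * J.1 → min (ν I) (ν J) ≤ ν L)
    (I J : Ideal R) : min (fgExtension ν I) (fgExtension ν J) ≤ fgExtension ν (I * J) :=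
  calc min (fgExtension ν I) (fgExtension ν J)
      = ⨆ (B : {J : Ideal R // J.FG}) (_ : B.1 ≤ J) (A : {J : Ideal R // J.FG}) (_ : A.1 ≤ I),
          min (ν A) (ν B) := by
        simp only [fgExtension, iSup₂_inf_eq, inf_iSup₂_eq]
    _ ≤ fgExtension ν (I * J) :=
        iSup₂_le fun B hB => iSup₂_le fun A hA =>
          (hmul A B ⟨_, A.2.mul B.2⟩ rfl).trans
            (le_iSup₂_of_le ⟨_, A.2.mul B.2⟩ (Ideal.mul_mono hA hB) le_rfl)

theorem fgExtension_eq_iSup_fg (hsup : ∀ I, ν I = ⨆ (J : {J : Ideal R // J.FG}) (_ : J.1 ≤ I.1), ν J)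
    (I : Ideal R) :
    fgExtension ν I = ⨆ (J : Ideal R) (_ : J ≤ I) (_ : J.FG), fgExtension ν J := by
  simp only [Ideal.iSup_fg_le_eq_iSup_subtype, fgExtension_coe hsup]
  rfl

theorem eq_fgExtension {t : Ideal R → ℕ∞} (ht : IsIdealValuation R t)
    (hν : ∀ J : {J : Ideal R // J.FG}, t J.1 = ν J) : t = fgExtension ν := by
  ext I
  rw [ht.2.2.2 I, Ideal.iSup_fg_le_eq_iSup_subtype]
  simp only [hν, fgExtension]

end IsIdealValuation

open IsIdealValuation in
theorem idealValuation_unique_extension_from_fg_general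
    (R : Type*) [CommRing R] (ν : {J : Ideal R // J.FG} → ℕ∞)
    (h0 : ∀ J : {J : Ideal R // J.FG}, J.1 = ⊥ → ν J = 0)
    (htop : ∀ J : {J : Ideal R // J.FG}, J.1 = ⊤ → ν J = ⊤)
    (hmul : ∀ I J L : {J : Ideal R // J.FG}, L.1 = I.1 * J.1 → min (ν I) (ν J) ≤ ν L)
    (hsup : ∀ I : {J : Ideal R // J.FG}, ν I = ⨆ (J : {J : Ideal R // J.FG}) (_ : J.1 ≤ I.1), ν J) :
    (∃! t : Ideal R → ℕ∞,
        IsIdealValuation R t ∧ ∀ J : {J : Ideal R // J.FG}, t J.1 = ν J) ∧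
    (∀ t : Ideal R → ℕ∞,
        (IsIdealValuation R t ∧ ∀ J : {J : Ideal R // J.FG}, t J.1 = ν J) →
        ∀ I : Ideal R, t I = ⨆ (J : {J : Ideal R // J.FG}) (_ : J.1 ≤ I), ν J) := by
  have hext : IsIdealValuation R (fgExtension ν) :=
    ⟨fgExtension_bot h0, fgExtension_top htop, min_fgExtension_le_mul hmul,
      fgExtension_eq_iSup_fg hsup⟩
  exact ⟨⟨fgExtension ν, ⟨hext, fgExtension_coe hsup⟩, fun t ht => eq_fgExtension ht.1 ht.2⟩,
    fun t ht => congrFun (eq_fgExtension ht.1 ht.2)⟩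

/-- A function defined on the finitely generated ideals of `R` satisfying (IV1)-(IV3)
extends uniquely to an ideal valuation on `R`, given by the supremum formula. -/
theorem idealValuation_unique_extension_from_fg
    (R : Type*) [CommRing R] [IsDomain R] (ν : {J : Ideal R // J.FG} → ℕ∞)
    (h0 : ∀ J : {J : Ideal R // J.FG}, J.1 = ⊥ → ν J = 0)
    (htop : ∀ J : {J : Ideal R // J.FG}, J.1 = ⊤ → ν J = ⊤)
    (hmul : ∀ I J L : {J : Ideal R // J.FG}, L.1 = I.1 * J.1 → min (ν I) (ν J) ≤ ν L)
    (hsup : ∀ I : {J : Ideal R // J.FG}, ν I = ⨆ (J : {J : Ideal R // J.FG}) (_ : J.1 ≤ I.1), ν J) :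
    (∃! t : Ideal R → ℕ∞,
        IsIdealValuation R t ∧ ∀ J : {J : Ideal R // J.FG}, t J.1 = ν J) ∧
    (∀ t : Ideal R → ℕ∞,
        (IsIdealValuation R t ∧ ∀ J : {J : Ideal R // J.FG}, t J.1 = ν J) →
        ∀ I : Ideal R, t I = ⨆ (J : {J : Ideal R // J.FG}) (_ : J.1 ≤ I), ν J) :=
  idealValuation_unique_extension_from_fg_general R ν h0 htop hmul hsup
end

section
/- Let φ : R → T be a ring homomorphism between integral domains and let ν be an ideal valuation on T. Then the function ν^c : Ideal(R) → ℕ∞ defined by ν^c(I) = ν(IT), where IT denotes the ideal of T generated by φ(I), is an ideal valuation on R. -/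
lemma mem_map_exists_fg {R T : Type*} [CommRing R] [CommRing T]
    (φ : R →+* T) (I : Ideal R) (x : T) (hx : x ∈ I.map φ) :
    ∃ J : Ideal R, J ≤ I ∧ J.FG ∧ x ∈ J.map φ := by
  rw [Ideal.map] at hx
  refine Submodule.span_induction ?_ ?_ ?_ ?_ hx
  · rintro _ ⟨a, ha, rfl⟩
    exact ⟨Ideal.span {a}, (Ideal.span_le).2 (by simpa using ha),
      ⟨{a}, by simp⟩, Ideal.mem_map_of_mem φ (Ideal.subset_span rfl)⟩
  · exact ⟨⊥, bot_le, Submodule.fg_bot, by simp⟩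
  · rintro x y _ _ ⟨J₁, hJ₁, hf₁, hx₁⟩ ⟨J₂, hJ₂, hf₂, hx₂⟩
    exact ⟨J₁ ⊔ J₂, sup_le hJ₁ hJ₂, Submodule.FG.sup hf₁ hf₂,
      Ideal.add_mem _ (Ideal.map_mono le_sup_left hx₁) (Ideal.map_mono le_sup_right hx₂)⟩
  · rintro a x _ ⟨J, hJ, hf, hx⟩
    exact ⟨J, hJ, hf, Ideal.mul_mem_left _ a hx⟩

lemma span_le_map_exists_fg {R T : Type*} [CommRing R] [CommRing T]
    (φ : R →+* T) (I : Ideal R) (s : Finset T) (hs : (s : Set T) ⊆ (I.map φ : Set T)) :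
    ∃ J : Ideal R, J ≤ I ∧ J.FG ∧ Ideal.span (s : Set T) ≤ J.map φ := by
  classical
  induction s using Finset.induction with
  | empty => exact ⟨⊥, bot_le, Submodule.fg_bot, by simp⟩
  | @insert a s ha ih =>
    rw [Finset.coe_insert, Set.insert_subset_iff] at hs
    obtain ⟨J₁, hJ₁, hf₁, hx₁⟩ := mem_map_exists_fg φ I a hs.1
    obtain ⟨J₂, hJ₂, hf₂, hx₂⟩ := ih hs.2
    refine ⟨J₁ ⊔ J₂, sup_le hJ₁ hJ₂, Submodule.FG.sup hf₁ hf₂, ?_⟩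
    rw [Finset.coe_insert, Ideal.span_insert]
    exact sup_le ((Ideal.span_le).2 (by simpa using Ideal.map_mono (le_sup_left (b := J₂)) hx₁))
      (hx₂.trans (Ideal.map_mono le_sup_right))

theorem idealValuation_contraction
    (R T : Type*) [CommRing R] [IsDomain R] [CommRing T] [IsDomain T]
    (φ : R →+* T) (ν : Ideal T → ℕ∞) (hν : IsIdealValuation T ν) :
    IsIdealValuation R (fun I => ν (I.map φ)) := by
  obtain ⟨h0, htop, hmul, hsup⟩ := hν
  have hmono : ∀ A B : Ideal T, A.FG → A ≤ B → ν A ≤ ν B := by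
    intro A B hA hle
    rw [hsup B]
    exact le_iSup_of_le A (le_iSup_of_le hle (le_iSup_of_le hA le_rfl))
  refine ⟨by simpa [Ideal.map_bot] using h0, by simpa [Ideal.map_top] using htop, ?_, ?_⟩
  · intro I J
    simpa [Ideal.map_mul] using hmul (I.map φ) (J.map φ)
  · intro I
    apply le_antisymm
    · show ν (I.map φ) ≤ _
      rw [hsup (I.map φ)]
      refine iSup₂_le fun K hK => iSup_le fun hKfg => ?_
      obtain ⟨s, rfl⟩ := hKfg
      obtain ⟨J, hJI, hJfg, hKJ⟩ := span_le_map_exists_fg φ I s (by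
        exact_mod_cast (Ideal.span_le.1 hK))
      have : ν (Ideal.span (s : Set T)) ≤ ν (J.map φ) :=
        hmono _ _ ⟨s, rfl⟩ hKJ
      exact this.trans (le_iSup_of_le J (le_iSup_of_le hJI (le_iSup_of_le hJfg le_rfl)))
    · refine iSup₂_le fun J hJ => iSup_le fun hJfg => ?_
      exact hmono (J.map φ) (I.map φ) (hJfg.map φ) (Ideal.map_mono hJ)
end

section
/- Let R ⊆ T be an inclusion of integral domains and let ν be an ideal valuation on R. Then the function ν^e : Ideal(T) → ℕ∞ defined by ν^e(I) = sup{ν(J) : J a finitely generated ideal of R with JT ⊆ I}, where JT denotes the ideal of T generated by J, is an ideal valuation on T. -/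
/-!
Every clause for `ν^e` reduces to the corresponding clause for `ν` on a finitely generated ideal
`J` of `R`: injectivity of `R → T` forces `JT = 0 → J = 0`; `(J₁J₂)T = J₁T · J₂T` and `J₁J₂` is
finitely generated; and `JT` is itself a finitely generated ideal of `T` contained in `I`, so it
already witnesses `ν J` in the supremum over finitely generated subideals of `I`.
-/

section extendIdealFun

variable {R T : Type*} [CommSemiring R] [CommSemiring T] (φ : R →+* T) (ν : Ideal R → ℕ∞)

/-- The extension `ν^e` of `ν` along `φ`. -/
noncomputable def extendIdealFun (I : Ideal T) : ℕ∞ :=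
  ⨆ (J : Ideal R) (_ : J.FG) (_ : J.map φ ≤ I), ν J

variable {φ ν}

theorem le_extendIdealFun {J : Ideal R} (hJ : J.FG) {I : Ideal T} (hJI : J.map φ ≤ I) :
    ν J ≤ extendIdealFun φ ν I :=
  le_iSup₂_of_le J hJ (le_iSup_of_le hJI le_rfl)

theorem extendIdealFun_le_iff {I : Ideal T} {a : ℕ∞} :
    extendIdealFun φ ν I ≤ a ↔ ∀ J : Ideal R, J.FG → J.map φ ≤ I → ν J ≤ a := by
  simp only [extendIdealFun, iSup_le_iff]

theorem extendIdealFun_mono : Monotone (extendIdealFun φ ν) := fun _ _ hII' =>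
  extendIdealFun_le_iff.2 fun _ hJ hJI => le_extendIdealFun hJ (hJI.trans hII')

theorem extendIdealFun_bot (hφ : Function.Injective φ) (hν : ν ⊥ = 0) :
    extendIdealFun φ ν ⊥ = 0 :=
  nonpos_iff_eq_zero.1 <| extendIdealFun_le_iff.2 fun J _ hJ => by
    rw [(Ideal.map_eq_bot_iff_of_injective hφ).1 (le_bot_iff.1 hJ), hν]

theorem extendIdealFun_top (hν : ν ⊤ = ⊤) : extendIdealFun φ ν ⊤ = ⊤ :=
  top_le_iff.1 <| hν ▸ le_extendIdealFun ⟨{1}, by simp⟩ le_top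

theorem min_le_extendIdealFun_mul (hν : ∀ I J : Ideal R, min (ν I) (ν J) ≤ ν (I * J))
    (I I' : Ideal T) :
    min (extendIdealFun φ ν I) (extendIdealFun φ ν I') ≤ extendIdealFun φ ν (I * I') := by
  simp only [extendIdealFun, iSup_inf_eq, inf_iSup_eq, iSup_le_iff]
  intro J' hJ' hJ'I J hJ hJI
  refine (hν J J').trans (le_extendIdealFun (φ := φ) (I := I * I') (hJ.mul hJ') ?_)
  rw [Ideal.map_mul]
  exact Ideal.mul_mono hJI hJ'I

theorem extendIdealFun_eq_iSup_fg (I : Ideal T) :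
    extendIdealFun φ ν I = ⨆ (J : Ideal T) (_ : J ≤ I) (_ : J.FG), extendIdealFun φ ν J := by
  refine le_antisymm (extendIdealFun_le_iff.2 fun J hJ hJI => ?_) ?_
  · exact le_iSup₂_of_le (J.map φ) hJI <| le_iSup_of_le (hJ.map φ) (le_extendIdealFun hJ le_rfl)
  · exact iSup₂_le fun J hJI => iSup_le fun _ => extendIdealFun_mono hJI

end extendIdealFun

theorem idealValuation_extension_general
    (R T : Type*) [CommRing R] [CommRing T]
    (φ : R →+* T) (hφ : Function.Injective φ)
    (ν : Ideal R → ℕ∞) (hν : IsIdealValuation R ν) :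
    IsIdealValuation T
      (fun I => ⨆ (J : Ideal R) (_ : J.FG) (_ : J.map φ ≤ I), ν J) :=
  ⟨extendIdealFun_bot hφ hν.1, extendIdealFun_top hν.2.1, min_le_extendIdealFun_mul hν.2.2.1,
    extendIdealFun_eq_iSup_fg⟩

theorem idealValuation_extension
    (R T : Type*) [CommRing R] [IsDomain R] [CommRing T] [IsDomain T]
    (φ : R →+* T) (hφ : Function.Injective φ)
    (ν : Ideal R → ℕ∞) (hν : IsIdealValuation R ν) :
    IsIdealValuation T
      (fun I => ⨆ (J : Ideal R) (_ : J.FG) (_ : J.map φ ≤ I), ν J) :=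
  idealValuation_extension_general R T φ hφ ν hν
end

section
/- Let R ⊆ T be an inclusion of integral domains. For an ideal valuation μ on R, let μ^e be the ideal valuation on T given by μ^e(I) = sup{μ(J) : J a finitely generated ideal of R with JT ⊆ I}; for an ideal valuation ν on T, let ν^c be the ideal valuation on R given by ν^c(I) = ν(IT). Then: (i) for every ideal valuation μ on R, ((μ^e)^c)^e = μ^e as functions on Ideal(T); and (ii) for every ideal valuation ν on T, ((ν^c)^e)^c = ν^c as functions on Ideal(R). -/
/-- Extension of an ideal valuation along an inclusion of domains. -/
noncomputable def extIV {R T : Type*} [CommRing R] [CommRing T] (φ : R →+* T)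
    (μ : Ideal R → ℕ∞) : Ideal T → ℕ∞ :=
  fun I => ⨆ (J : Ideal R) (_ : J.FG) (_ : J.map φ ≤ I), μ J

/-- Contraction of an ideal valuation along an inclusion of domains. -/
def conIV {R T : Type*} [CommRing R] [CommRing T] (φ : R →+* T)
    (ν : Ideal T → ℕ∞) : Ideal R → ℕ∞ :=
  fun I => ν (I.map φ)

/-- IV3 implies monotonicity. -/
lemma IV_mono {R : Type*} [CommRing R] {ν : Ideal R → ℕ∞}
    (h : ∀ I : Ideal R, ν I = ⨆ (J : Ideal R) (_ : J ≤ I) (_ : J.FG), ν J) :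
    Monotone ν := by
  intro I J hIJ
  rw [h I, h J]
  exact iSup_le fun K => iSup_le fun hK => iSup_le fun hKfg =>
    le_iSup_of_le K (le_iSup_of_le (hK.trans hIJ) (le_iSup_of_le hKfg le_rfl))

/-- A f.g. ideal contained in `I.map φ` is contained in `J.map φ` for some f.g. `J ≤ I`. -/
lemma exists_fg_le_map {R T : Type*} [CommRing R] [CommRing T] (φ : R →+* T)
    (I : Ideal R) (L : Ideal T) (hL : L.FG) (hLI : L ≤ I.map φ) :
    ∃ J : Ideal R, J.FG ∧ J ≤ I ∧ L ≤ J.map φ := by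
  classical
  obtain ⟨s, rfl⟩ := hL
  induction s using Finset.induction generalizing I with
  | empty =>
    exact ⟨⊥, Submodule.fg_bot, bot_le, by simp⟩
  | @insert x s hx ih =>
    have hsub : Ideal.span (s : Set T) ≤ I.map φ := by
      refine le_trans (Ideal.span_mono ?_) hLI
      simp [Set.subset_insert]
    obtain ⟨J, hJfg, hJI, hJL⟩ := ih I hsub
    have hxI : x ∈ I.map φ := hLI (Ideal.subset_span (by simp))
    rw [Ideal.map, Ideal.span] at hxI
    obtain ⟨t, hts, hxt⟩ := Submodule.mem_span_finite_of_mem_span hxI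
    -- each element of t is φ r for r ∈ I; choose preimages
    choose f hfI hf using fun y (hy : y ∈ t) => hts hy
    refine ⟨J ⊔ Ideal.span (Set.range fun y : t => f y y.2),
      Submodule.FG.sup hJfg (Submodule.fg_span (Set.finite_range _)), ?_, ?_⟩
    · refine sup_le hJI (Ideal.span_le.2 ?_)
      rintro _ ⟨y, rfl⟩
      exact hfI y y.2
    · rw [Finset.coe_insert, Ideal.span_insert]
      refine sup_le ?_ (hJL.trans (Ideal.map_mono le_sup_left))
      rw [Ideal.span_singleton_le_iff_mem]
      refine Ideal.map_mono (le_sup_right (a := J)) ?_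
      have : (t : Set T) ⊆ φ '' (Ideal.span (Set.range fun y : t => f y y.2) : Set R) := by
        intro y hy
        exact ⟨f y hy, Ideal.subset_span ⟨⟨y, hy⟩, rfl⟩, hf y hy⟩
      have h2 : Ideal.span (t : Set T) ≤
          Ideal.map φ (Ideal.span (Set.range fun y : t => f y y.2)) := by
        rw [Ideal.span_le]
        intro y hy
        obtain ⟨r, hr, rfl⟩ := this hy
        exact Ideal.mem_map_of_mem φ hr
      exact h2 hxt

theorem idealValuation_ece_and_cec
    (R T : Type*) [CommRing R] [IsDomain R] [CommRing T] [IsDomain T]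
    (φ : R →+* T) (hφ : Function.Injective φ) :
    (∀ μ : Ideal R → ℕ∞, IsIdealValuation R μ →
        extIV φ (conIV φ (extIV φ μ)) = extIV φ μ) ∧
    (∀ ν : Ideal T → ℕ∞, IsIdealValuation T ν →
        conIV φ (extIV φ (conIV φ ν)) = conIV φ ν) := by
  constructor
  · intro μ _
    funext I
    apply le_antisymm
    · refine iSup_le fun J => iSup_le fun hJfg => iSup_le fun hJI => ?_
      -- conIV φ (extIV φ μ) J = extIV φ μ (J.map φ) = ⨆ K fg, K.map φ ≤ J.map φ, μ K
      refine iSup_le fun K => iSup_le fun hKfg => iSup_le fun hKJ => ?_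
      exact le_iSup_of_le K (le_iSup_of_le hKfg (le_iSup_of_le (hKJ.trans hJI) le_rfl))
    · refine iSup_le fun J => iSup_le fun hJfg => iSup_le fun hJI => ?_
      refine le_iSup_of_le J (le_iSup_of_le hJfg (le_iSup_of_le hJI ?_))
      exact le_iSup_of_le J (le_iSup_of_le hJfg (le_iSup_of_le le_rfl le_rfl))
  · intro ν hν
    obtain ⟨-, -, -, h3⟩ := hν
    have hmono := IV_mono h3
    funext I
    apply le_antisymm
    · refine iSup_le fun J => iSup_le fun hJfg => iSup_le fun hJI => ?_
      exact hmono hJI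
    · show ν (I.map φ) ≤ _
      rw [h3 (I.map φ)]
      refine iSup_le fun L => iSup_le fun hLI => iSup_le fun hLfg => ?_
      obtain ⟨J, hJfg, hJI, hLJ⟩ := exists_fg_le_map φ I L hLfg hLI
      exact le_iSup_of_le J (le_iSup_of_le hJfg
        (le_iSup_of_le (Ideal.map_mono hJI) (hmono hLJ)))
end

section
/- Let R be an integral domain that is not a field. Then R is a one-dimensional quasi-local domain (i.e., R has a unique maximal ideal and Krull dimension 1) if and only if every ideal valuation on R is constant on proper ideals, i.e., for every ideal valuation ν on R there exists c ∈ ℕ∞ such that ν(I) = c for every nonzero proper ideal I of R. -/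
open IsLocalRing

section CommRing

variable {R : Type*} [CommRing R]

namespace IsIdealValuation

variable {ν : Ideal R → ℕ∞}

theorem monotone (hv : IsIdealValuation R ν) : Monotone ν := by
  intro J I hJI
  rw [hv.2.2.2 J, hv.2.2.2 I]
  exact iSup₂_le fun K hK => iSup_le fun hfg =>
    le_iSup₂_of_le K (hK.trans hJI) (le_iSup_of_le hfg le_rfl)

theorem le_pow_succ (hv : IsIdealValuation R ν) (I : Ideal R) (n : ℕ) :
    ν I ≤ ν (I ^ (n + 1)) := by
  induction n with
  | zero => simp
  | succ n ih =>
    calc ν I ≤ min (ν (I ^ (n + 1))) (ν I) := le_min ih le_rfl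
      _ ≤ ν (I ^ (n + 1) * I) := hv.2.2.1 _ _
      _ = ν (I ^ (n + 2)) := by rw [← pow_succ]

theorem le_of_le_radical (hv : IsIdealValuation R ν) {I K : Ideal R} (hIK : I ≤ K.radical) :
    ν I ≤ ν K := by
  rw [hv.2.2.2 I]
  refine iSup₂_le fun J hJI => iSup_le fun hJ => ?_
  obtain ⟨n, hn⟩ := Ideal.exists_pow_le_of_le_radical_of_fg (hJI.trans hIK) hJ
  calc ν J ≤ ν (J ^ (n + 1)) := hv.le_pow_succ J n
    _ ≤ ν K := hv.monotone ((Ideal.pow_le_pow_right n.le_succ).trans hn)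

theorem eq_of_radical_eq (hv : IsIdealValuation R ν) {I K : Ideal R}
    (h : I.radical = K.radical) : ν I = ν K :=
  le_antisymm (hv.le_of_le_radical (h ▸ Ideal.le_radical))
    (hv.le_of_le_radical (h ▸ Ideal.le_radical))

end IsIdealValuation

open Classical in
noncomputable def primeIdealValuation (p : Ideal R) : Ideal R → ℕ∞ :=
  fun I => if I ≤ p then 0 else ⊤

theorem primeIdealValuation_of_le {p I : Ideal R} (h : I ≤ p) : primeIdealValuation p I = 0 :=
  if_pos h

theorem primeIdealValuation_of_not_le {p I : Ideal R} (h : ¬I ≤ p) :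
    primeIdealValuation p I = ⊤ :=
  if_neg h

theorem isIdealValuation_primeIdealValuation {p : Ideal R} (hp : p.IsPrime) :
    IsIdealValuation R (primeIdealValuation p) := by
  refine ⟨primeIdealValuation_of_le bot_le,
    primeIdealValuation_of_not_le fun h => hp.ne_top (top_le_iff.mp h),
    fun I J => ?_, fun I => ?_⟩
  · by_cases h : I * J ≤ p
    · rcases hp.mul_le.mp h with h' | h' <;> simp [primeIdealValuation_of_le h']
    · simp [primeIdealValuation_of_not_le h]
  · by_cases hI : I ≤ p
    · rw [primeIdealValuation_of_le hI]
      refine le_antisymm zero_le (iSup₂_le fun K hK => iSup_le fun _ => ?_)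
      rw [primeIdealValuation_of_le (hK.trans hI)]
    · obtain ⟨x, hxI, hxp⟩ := SetLike.not_le_iff_exists.mp hI
      have hx : ¬Ideal.span {x} ≤ p := by rwa [Ideal.span_singleton_le_iff_mem]
      rw [primeIdealValuation_of_not_le hI]
      refine le_antisymm ?_ le_top
      refine le_iSup₂_of_le (Ideal.span {x}) ((Ideal.span_singleton_le_iff_mem I).mpr hxI) ?_
      exact le_iSup_of_le ⟨{x}, by simp⟩ (primeIdealValuation_of_not_le hx).ge

theorem le_of_forall_isIdealValuation_const
    (h : ∀ ν : Ideal R → ℕ∞, IsIdealValuation R ν →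
      ∃ c : ℕ∞, ∀ I : Ideal R, I ≠ ⊥ → I ≠ ⊤ → ν I = c)
    {p I : Ideal R} (hp : p.IsPrime) (hp0 : p ≠ ⊥) (hI0 : I ≠ ⊥) (hI : I ≠ ⊤) :
    I ≤ p := by
  obtain ⟨c, hc⟩ := h _ (isIdealValuation_primeIdealValuation hp)
  by_contra hIp
  have hc0 : c = 0 := (hc p hp0 hp.ne_top).symm.trans (primeIdealValuation_of_le le_rfl)
  simpa [hc0, primeIdealValuation_of_not_le hIp] using hc I hI0 hI

end CommRing

section IsDomain

variable {R : Type*} [CommRing R] [IsDomain R]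

theorem radical_eq_maximalIdeal_of_ringKrullDim_eq_one [IsLocalRing R]
    (hdim : ringKrullDim R = 1) {I : Ideal R} (hI0 : I ≠ ⊥) (hI : I ≠ ⊤) :
    I.radical = maximalIdeal R := by
  obtain ⟨x, hxI, hx0⟩ := Submodule.exists_mem_ne_zero_of_ne_bot hI0
  refine le_antisymm ((maximalIdeal.isMaximal R).isPrime.radical_le_iff.mpr (le_maximalIdeal hI)) ?_
  calc maximalIdeal R ≤ (Ideal.span {x}).radical :=
        (ringKrullDim_eq_one_iff_of_isLocalRing_isDomain.mp hdim).2 x hx0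
    _ ≤ I.radical := Ideal.radical_mono ((Ideal.span_singleton_le_iff_mem I).mpr hxI)

theorem isLocalRing_and_ringKrullDim_eq_one_of_forall_le_prime (hnf : ¬IsField R)
    (h : ∀ I p : Ideal R, I ≠ ⊥ → I ≠ ⊤ → p.IsPrime → p ≠ ⊥ → I ≤ p) :
    IsLocalRing R ∧ ringKrullDim R = 1 := by
  have hmax0 {m : Ideal R} (hm : m.IsMaximal) : m ≠ ⊥ :=
    Ring.ne_bot_of_isMaximal_of_not_isField hm hnf
  obtain ⟨m, hm⟩ := Ideal.exists_maximal R
  have : IsLocalRing R := IsLocalRing.of_unique_max_ideal ⟨m, hm, fun m' hm' =>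
    hm'.eq_of_le hm.ne_top (h m' m (hmax0 hm') hm'.ne_top hm.isPrime (hmax0 hm))⟩
  refine ⟨this, ringKrullDim_eq_one_iff_of_isLocalRing_isDomain.mpr ⟨hnf, fun x hx => ?_⟩⟩
  rw [Ideal.radical_eq_sInf]
  refine le_sInf fun p ⟨hxp, hp⟩ => h _ p (hmax0 (maximalIdeal.isMaximal R))
    (maximalIdeal.isMaximal R).ne_top hp fun hp0 => hx ?_
  simpa [hp0] using hxp (Ideal.mem_span_singleton_self x)

end IsDomain

theorem oneDim_quasiLocal_iff_idealValuations_constant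
    (R : Type*) [CommRing R] [IsDomain R] (hnf : ¬IsField R) :
    (IsLocalRing R ∧ ringKrullDim R = 1) ↔
      (∀ ν : Ideal R → ℕ∞, IsIdealValuation R ν →
        ∃ c : ℕ∞, ∀ I : Ideal R, I ≠ ⊥ → I ≠ ⊤ → ν I = c) := by
  constructor
  · rintro ⟨hloc, hdim⟩ ν hv
    refine ⟨ν (maximalIdeal R), fun I hI0 hI => hv.eq_of_radical_eq ?_⟩
    rw [radical_eq_maximalIdeal_of_ringKrullDim_eq_one hdim hI0 hI,
      (maximalIdeal.isMaximal R).isPrime.radical]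
  · intro h
    exact isLocalRing_and_ringKrullDim_eq_one_of_forall_le_prime hnf
      fun I p hI0 hI hp hp0 => le_of_forall_isIdealValuation_const h hp hp0 hI0 hI
end

section
/- Let R be an integral domain with quotient field K and let J be a nonzero proper finitely generated ideal of R. Then (R :_K J) = R, where (R :_K J) = {x ∈ K : xJ ⊆ R}, if and only if the ideal J·R[X] of the polynomial ring R[X] contains a weak regular sequence of length two, i.e., there exist f, g ∈ J·R[X] such that f is a nonzerodivisor on R[X] and g is a nonzerodivisor on R[X]/(f). -/
/-!
If `x J ⊆ R` and `f, g ∈ J R[X]`, then `x f = p` and `x g = q` lie in `R[X]`, and `p g = q f`;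
when `g` is regular modulo `f` this forces `f ∣ p`, so the constant `x = p / f` is a polynomial
over `R`, i.e. `x ∈ R`. Conversely, take `f = a ∈ J \ {0}` and let `g` be a polynomial whose
coefficients generate `J`. By McCoy's theorem `g` is a zero divisor modulo `a` only if some
`s ∉ aR` has `s J ⊆ aR`, and then `s / a ∈ (R :_K J) \ R`.
-/

open Polynomial
open scoped nonZeroDivisors

theorem MulEquivClass.map_mem_nonZeroDivisors_iff {M₀ S F : Type*} [MonoidWithZero M₀]
    [MonoidWithZero S] [EquivLike F M₀ S] [MulEquivClass F M₀ S] (e : F) {x : M₀} :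
    e x ∈ S⁰ ↔ x ∈ M₀⁰ := by
  rw [← MulEquivClass.map_nonZeroDivisors e]
  exact Submonoid.mem_map_iff_mem (EquivLike.injective e)

namespace Polynomial

variable {R : Type*} [CommRing R]

theorem contentIdeal_le_iff {p : R[X]} {I : Ideal R} : p.contentIdeal ≤ I ↔ p ∈ I.map C := by
  rw [contentIdeal_def, Ideal.span_le, Ideal.mem_map_C_iff]
  refine ⟨fun h n => ?_, fun h c hc => ?_⟩
  · by_cases hn : p.coeff n = 0
    · exact hn ▸ I.zero_mem
    · exact h (coeff_mem_coeffs hn)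
  · obtain ⟨n, -, rfl⟩ := mem_coeffs_iff.1 hc
    exact h n

theorem mem_colon_contentIdeal_iff {p : R[X]} {I : Ideal R} {s : R} :
    s ∈ I.colon p.contentIdeal ↔ ∀ n, s * p.coeff n ∈ I := by
  rw [contentIdeal_def, Ideal.colon_span, Submodule.mem_colon]
  refine ⟨fun h n => ?_, fun h c hc => ?_⟩
  · by_cases hn : p.coeff n = 0
    · rw [hn, mul_zero]; exact I.zero_mem
    · exact h _ (coeff_mem_coeffs hn)
  · obtain ⟨n, -, rfl⟩ := mem_coeffs_iff.1 hc
    exact h n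

theorem exists_contentIdeal_eq_of_fg {J : Ideal R} (hJ : J.FG) : ∃ g : R[X], g.contentIdeal = J := by
  classical
  obtain ⟨n, v, rfl⟩ := Submodule.fg_iff_exists_fin_generating_family.1 hJ
  refine ⟨ofFn n v, le_antisymm (contentIdeal_le_iff.2 (Ideal.mem_map_C_iff.2 fun i => ?_)) ?_⟩
  · rcases lt_or_ge i n with hi | hi
    · rw [ofFn_coeff_eq_val_of_lt v hi]
      exact Ideal.subset_span ⟨_, rfl⟩
    · rw [ofFn_coeff_eq_zero_of_ge v hi]
      exact Ideal.zero_mem _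
  · rw [Ideal.span_le]
    rintro _ ⟨i, rfl⟩
    simpa using (ofFn n v).coeff_mem_contentIdeal i

theorem mk_mem_nonZeroDivisors_quotient_map_C_iff {I : Ideal R} {g : R[X]} :
    Ideal.Quotient.mk (I.map C) g ∈ (R[X] ⧸ I.map C)⁰ ↔ I.colon g.contentIdeal ≤ I := by
  rw [← MulEquivClass.map_mem_nonZeroDivisors_iff I.polynomialQuotientEquivQuotientPolynomial.symm,
    Ideal.polynomialQuotientEquivQuotientPolynomial_symm_mk, Polynomial.mem_nonZeroDivisors_iff,
    Ideal.Quotient.mk_surjective.forall]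
  refine forall_congr' fun s => ?_
  simp only [Polynomial.ext_iff, coeff_smul, coeff_map, coeff_zero, smul_eq_mul, ← map_mul,
    Ideal.Quotient.eq_zero_iff_mem, ← mem_colon_contentIdeal_iff]

theorem C_mul_map_mem_lifts {K : Type*} [CommRing K] [Algebra R K] {J : Ideal R} {x : K}
    (hx : ∀ a ∈ J, x * algebraMap R K a ∈ Set.range (algebraMap R K)) {p : R[X]}
    (hp : p ∈ J.map C) : C x * p.map (algebraMap R K) ∈ lifts (algebraMap R K) :=
  (lifts_iff_coeff_lifts _).2 fun n => by
    rw [coeff_C_mul, coeff_map]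
    exact hx _ (Ideal.mem_map_C_iff.1 hp n)

end Polynomial

theorem RingHom.mem_range_of_mul_mem_range_of_regular {A B : Type*} [CommRing A] [CommRing B]
    [IsDomain B] (φ : A →+* B) (hφ : Function.Injective φ) {f g : A} (hf : f ≠ 0)
    (hg : Ideal.Quotient.mk (Ideal.span {f}) g ∈ (A ⧸ Ideal.span {f})⁰) {y : B}
    (hyf : y * φ f ∈ Set.range φ) (hyg : y * φ g ∈ Set.range φ) : y ∈ Set.range φ := by
  obtain ⟨p, hp⟩ := hyf
  obtain ⟨q, hq⟩ := hyg
  have hpq : p * g = q * f := hφ <| by rw [map_mul, map_mul, hp, hq]; ring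
  obtain ⟨h, rfl⟩ : f ∣ p := by
    rw [← Ideal.mem_span_singleton, ← Ideal.Quotient.eq_zero_iff_mem]
    refine mem_nonZeroDivisors_iff_right.1 hg _ ?_
    rw [← map_mul, hpq, map_mul, Ideal.Quotient.eq_zero_iff_mem.2 (Ideal.mem_span_singleton_self f),
      mul_zero]
  refine ⟨h, mul_right_cancel₀ ((map_ne_zero_iff φ hφ).2 hf) ?_⟩
  rw [← map_mul, mul_comm, hp]

section FractionRing

variable {R K : Type*} [CommRing R] [Field K] [Algebra R K] [IsFractionRing R K] {J : Ideal R}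

theorem mem_range_algebraMap_of_regular_pair {f g : R[X]} (hf : f ∈ J.map C) (hg : g ∈ J.map C)
    (hf0 : f ≠ 0) (hfg : Ideal.Quotient.mk (Ideal.span {f}) g ∈ (R[X] ⧸ Ideal.span {f})⁰) {x : K}
    (hx : ∀ a ∈ J, x * algebraMap R K a ∈ Set.range (algebraMap R K)) :
    x ∈ Set.range (algebraMap R K) := by
  have hCx : C x ∈ lifts (algebraMap R K) :=
    (mapRingHom (algebraMap R K)).mem_range_of_mul_mem_range_of_regular
      (map_injective _ (IsFractionRing.injective R K)) hf0 hfg (C_mul_map_mem_lifts hx hf)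
      (C_mul_map_mem_lifts hx hg)
  simpa using (lifts_iff_coeff_lifts _).1 hCx 0

theorem colon_span_singleton_le_of_forall_mul_mem_range [IsDomain R]
    (hJ : ∀ x : K, (∀ b ∈ J, x * algebraMap R K b ∈ Set.range (algebraMap R K)) →
      x ∈ Set.range (algebraMap R K))
    {a : R} (ha : a ≠ 0) : (Ideal.span {a}).colon (J : Set R) ≤ Ideal.span {a} := by
  intro s hs
  have ha' : algebraMap R K a ≠ 0 := IsFractionRing.to_map_ne_zero_of_mem_nonZeroDivisors
    (mem_nonZeroDivisors_of_ne_zero ha)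
  obtain ⟨r, hr⟩ := hJ (algebraMap R K s / algebraMap R K a) fun b hb => by
    obtain ⟨c, hc⟩ := Ideal.mem_span_singleton'.1 (Submodule.mem_colon.1 hs b hb)
    refine ⟨c, ?_⟩
    rw [div_mul_eq_mul_div, eq_div_iff ha', ← map_mul, ← map_mul, hc, smul_eq_mul]
  rw [eq_div_iff ha', ← map_mul] at hr
  exact Ideal.mem_span_singleton'.2 ⟨r, IsFractionRing.injective R K hr⟩

end FractionRing

theorem inv_eq_ring_iff_weak_regular_sequence_in_polynomial_ring_general
    (R : Type*) [CommRing R] [IsDomain R] (J : Ideal R)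
    (hbot : J ≠ ⊥) (hfg : J.FG) :
    {x : FractionRing R | ∀ a ∈ J, x * algebraMap R (FractionRing R) a ∈
        Set.range (algebraMap R (FractionRing R))} =
      Set.range (algebraMap R (FractionRing R)) ↔
    ∃ f ∈ J.map (Polynomial.C : R →+* Polynomial R),
      ∃ g ∈ J.map (Polynomial.C : R →+* Polynomial R),
        f ∈ nonZeroDivisors (Polynomial R) ∧
        Ideal.Quotient.mk (Ideal.span {f}) g ∈
          nonZeroDivisors (Polynomial R ⧸ Ideal.span {f}) := by
  constructor
  · intro hcolon
    obtain ⟨a, haJ, ha0⟩ := Submodule.exists_mem_ne_zero_of_ne_bot hbot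
    obtain ⟨g, hg⟩ := exists_contentIdeal_eq_of_fg hfg
    refine ⟨C a, Ideal.mem_map_of_mem _ haJ, g, contentIdeal_le_iff.1 hg.le,
      mem_nonZeroDivisors_of_ne_zero (C_ne_zero.2 ha0), ?_⟩
    rw [← Set.image_singleton, ← Ideal.map_span, mk_mem_nonZeroDivisors_quotient_map_C_iff, hg]
    exact colon_span_singleton_le_of_forall_mul_mem_range (fun _ hx => hcolon.subset hx) ha0
  · rintro ⟨f, hf, g, hg, hf0, hfg⟩
    refine subset_antisymm (fun x hx => mem_range_algebraMap_of_regular_pair hf hg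
      (nonZeroDivisors.ne_zero hf0) hfg hx) ?_
    rintro _ ⟨r, rfl⟩ b -
    exact ⟨r * b, map_mul _ _ _⟩

theorem inv_eq_ring_iff_weak_regular_sequence_in_polynomial_ring
    (R : Type*) [CommRing R] [IsDomain R] (J : Ideal R)
    (hbot : J ≠ ⊥) (htop : J ≠ ⊤) (hfg : J.FG) :
    {x : FractionRing R | ∀ a ∈ J, x * algebraMap R (FractionRing R) a ∈
        Set.range (algebraMap R (FractionRing R))} =
      Set.range (algebraMap R (FractionRing R)) ↔
    ∃ f ∈ J.map (Polynomial.C : R →+* Polynomial R),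
      ∃ g ∈ J.map (Polynomial.C : R →+* Polynomial R),
        f ∈ nonZeroDivisors (Polynomial R) ∧
        Ideal.Quotient.mk (Ideal.span {f}) g ∈
          nonZeroDivisors (Polynomial R ⧸ Ideal.span {f}) :=
  inv_eq_ring_iff_weak_regular_sequence_in_polynomial_ring_general R J hbot hfg
end

section
/- Let R be a commutative ring in which every finitely generated ideal has only finitely many minimal primes (an FGFC ring), and let I be an ideal of R with ht(I) ≥ k for some natural number k. Then there exist elements x_1, …, x_k ∈ I such that ht((x_1, …, x_i)R) ≥ i for each i ∈ {1, …, k}. -/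
/-!
Build the sequence one element at a time. If `J = (x₁, …, xₘ)` has height `≥ m`, only finitely
many primes are minimal over `J` (the ring is FGFC), and `I` lies in none of those of height `≤ m`
because `ht I > m`. Prime avoidance gives `y ∈ I` outside all of them. A prime `Q ⊇ J + (y)`
contains a minimal prime `P` of `J`: either `ht P > m` already, or `y ∉ P`, so `P < Q` and
`ht Q > ht P ≥ m`.
-/

/-- The height of an ideal: the infimum of the heights of the prime ideals containing it
(the infimum over the empty set being `∞`). -/
noncomputable def idealHeight (R : Type*) [CommRing R] (I : Ideal R) : ℕ∞ :=
  ⨅ (P : PrimeSpectrum R) (_ : I ≤ P.asIdeal), Order.height P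

open Ideal Set

section Image

variable {α : Type*} (x : ℕ → α) (m : ℕ) (y : α)

lemma image_update_Iio_of_le {i : ℕ} (hi : i ≤ m) :
    Function.update x m y '' Iio i = x '' Iio i :=
  image_congr fun _ hj => Function.update_of_ne (ne_of_lt (lt_of_lt_of_le hj hi)) _ _

lemma image_update_Iio_add_one :
    Function.update x m y '' Iio (m + 1) = insert y (x '' Iio m) := by
  rw [← Order.succ_eq_add_one, Order.Iio_succ, ← Iio_insert, image_insert_eq,
    Function.update_self, image_update_Iio_of_le x m y le_rfl]

end Image

section IdealHeight

variable {R : Type*} [CommRing R]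

lemma idealHeight_le_height {I : Ideal R} {P : PrimeSpectrum R} (h : I ≤ P.asIdeal) :
    idealHeight R I ≤ Order.height P :=
  iInf₂_le P h

lemma le_idealHeight_iff {I : Ideal R} {n : ℕ∞} :
    n ≤ idealHeight R I ↔ ∀ P : PrimeSpectrum R, I ≤ P.asIdeal → n ≤ Order.height P :=
  le_iInf₂_iff

lemma exists_mem_forall_notMem_of_finite {I : Ideal R} {s : Set (PrimeSpectrum R)}
    (hs : s.Finite) (hI : ∀ P ∈ s, ¬I ≤ P.asIdeal) :
    ∃ y ∈ I, ∀ P ∈ s, y ∉ P.asIdeal := by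
  by_contra! hcover
  obtain ⟨P₀, -, -⟩ := hcover 0 I.zero_mem
  obtain ⟨P, hP, hIP⟩ := (subset_union_prime_finite hs P₀ P₀ fun P _ _ _ => P.isPrime).mp
    fun y hy => let ⟨P, hP, hyP⟩ := hcover y hy; mem_biUnion hP hyP
  exact hI P hP hIP

lemma exists_mem_lt_idealHeight_sup_span {I J : Ideal R} {m : ℕ}
    (hJ : J.minimalPrimes.Finite) (hJm : (m : ℕ∞) ≤ idealHeight R J)
    (hIm : (m : ℕ∞) < idealHeight R I) :
    ∃ y ∈ I, (m : ℕ∞) < idealHeight R (J ⊔ span {y}) := by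
  set bad : Set (PrimeSpectrum R) :=
    {P | P.asIdeal ∈ J.minimalPrimes ∧ Order.height P ≤ m}
  have hbad : bad.Finite :=
    (hJ.preimage fun _ _ _ _ => PrimeSpectrum.ext).subset fun _ hP => hP.1
  obtain ⟨y, hyI, hy⟩ := exists_mem_forall_notMem_of_finite hbad fun P hP hIP =>
    (hIm.trans_le ((idealHeight_le_height hIP).trans hP.2)).false
  refine ⟨y, hyI, ?_⟩
  have hm : (m : ℕ∞) ≠ ⊤ := ENat.natCast_ne_top m
  rw [← ENat.add_one_le_iff hm, le_idealHeight_iff]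
  intro Q hQ
  rw [ENat.add_one_le_iff hm]
  obtain ⟨P, hPmin, hPQ⟩ := exists_minimalPrimes_le (le_sup_left.trans hQ)
  let P' : PrimeSpectrum R := ⟨P, hPmin.1.1⟩
  by_cases hP'm : Order.height P' ≤ m
  · have hyQ : y ∈ Q.asIdeal := hQ (mem_sup_right (mem_span_singleton_self y))
    have hP'Q : P' < Q := lt_of_le_of_ne hPQ fun h => hy P' ⟨hPmin, hP'm⟩ (h ▸ hyQ)
    calc (m : ℕ∞) ≤ Order.height P' := hJm.trans (idealHeight_le_height hPmin.1.2)
      _ < Order.height Q := Order.height_strictMono hP'Q (hP'm.trans_lt (ENat.natCast_lt_top m))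
  · exact (not_le.mp hP'm).trans_le (Order.height_mono hPQ)

lemma exists_seq_le_idealHeight_span (hFGFC : ∀ J : Ideal R, J.FG → J.minimalPrimes.Finite)
    {I : Ideal R} (m : ℕ) (hm : (m : ℕ∞) ≤ idealHeight R I) :
    ∃ x : ℕ → R, (∀ i < m, x i ∈ I) ∧
      ∀ i ≤ m, (i : ℕ∞) ≤ idealHeight R (span (x '' Iio i)) := by
  induction m with
  | zero => exact ⟨0, by simp, by simp⟩
  | succ m ih =>
    obtain ⟨x, hxI, hx⟩ := ih (le_trans (by gcongr; omega) hm)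
    have hJ : (span (x '' Iio m)).minimalPrimes.Finite :=
      hFGFC _ ⟨((finite_Iio m).image x).toFinset, by simp⟩
    have hIm : (m : ℕ∞) < idealHeight R I :=
      (ENat.add_one_le_iff (ENat.natCast_ne_top m)).mp (by exact_mod_cast hm)
    obtain ⟨y, hyI, hy⟩ := exists_mem_lt_idealHeight_sup_span hJ (hx m le_rfl) hIm
    refine ⟨Function.update x m y, fun i hi => ?_, fun i hi => ?_⟩
    · rcases Nat.lt_succ_iff_lt_or_eq.mp hi with hi | rfl
      · simpa [Function.update_of_ne hi.ne] using hxI i hi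
      · simpa using hyI
    · rcases Nat.le_succ_iff.mp hi with hi | rfl
      · rw [image_update_Iio_of_le x m y hi]
        exact hx i hi
      · rw [image_update_Iio_add_one, span_insert, sup_comm]
        exact (ENat.add_one_le_iff (ENat.natCast_ne_top m)).mpr hy

end IdealHeight

theorem exists_sequence_of_heights_in_FGFC
    (R : Type*) [CommRing R]
    (hFGFC : ∀ I : Ideal R, I.FG → I.minimalPrimes.Finite)
    (I : Ideal R) (k : ℕ) (hk : (k : ℕ∞) ≤ idealHeight R I) :
    ∃ x : ℕ → R, (∀ i < k, x i ∈ I) ∧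
      ∀ i : ℕ, 1 ≤ i → i ≤ k →
        (i : ℕ∞) ≤ idealHeight R (Ideal.span (x '' {j : ℕ | j < i})) := by
  obtain ⟨x, hxI, hx⟩ := exists_seq_le_idealHeight_span hFGFC k hk
  exact ⟨x, hxI, fun i _ hi => hx i hi⟩
end

section
/- Let R be an integral domain in which every finitely generated ideal has only finitely many minimal primes (an FGFC domain). Then the height function ht : Ideal(R) → ℕ∞ is an ideal valuation on R, where ht(I) is the infimum of the heights of the prime ideals containing I (so ht(R) = ∞ by the convention that the infimum over the empty set is ∞). -/
theorem idealHeight_eq_height {R : Type*} [CommRing R] (I : Ideal R) :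
    idealHeight R I = I.height := by
  refine le_antisymm ?_
    (le_iInf₂ fun P hP => (Ideal.height_mono hP).trans_eq P.height_eq_orderHeight)
  rw [Ideal.height_eq_inf_minimalPrimes]
  refine le_iInf₂ fun P hP => ?_
  let p : PrimeSpectrum R := ⟨P, hP.isPrime⟩
  exact (iInf₂_le p hP.1.2).trans_eq p.height_eq_orderHeight.symm

namespace Ideal

variable {R : Type*} [CommRing R]

theorem min_height_le_height_mul (I J : Ideal R) : min I.height J.height ≤ (I * J).height := by
  rw [height_eq_inf_minimalPrimes (I * J)]
  refine le_iInf₂ fun P hP => ?_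
  rcases hP.isPrime.mul_le.mp hP.1.2 with hI | hJ
  · exact (min_le_left _ _).trans (height_mono hI)
  · exact (min_le_right _ _).trans (height_mono hJ)

theorem exists_mem_notMem_of_height_lt {I J : Ideal R} (hJ : J.minimalPrimes.Finite) :
    ∃ x ∈ I, ∀ P ∈ J.minimalPrimes, P.height < I.height → x ∉ P := by
  have hS : {P ∈ J.minimalPrimes | P.height < I.height}.Finite := hJ.subset (Set.sep_subset _ _)
  have hI : ¬ (I : Set R) ⊆ ⋃ P ∈ {P ∈ J.minimalPrimes | P.height < I.height}, P := by
    rw [subset_union_prime_finite hS ⊥ ⊥ fun P hP _ _ => hP.1.isPrime]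
    rintro ⟨P, hP, hIP⟩
    exact (height_mono hIP).not_gt hP.2
  simp only [Set.not_subset, Set.mem_iUnion, not_exists] at hI
  obtain ⟨x, hxI, hx⟩ := hI
  exact ⟨x, hxI, fun P hP hlt hxP => hx P ⟨hP, hlt⟩ hxP⟩

theorem natCast_add_one_le_height_sup_span_singleton {J : Ideal R} {x : R} {r : ℕ}
    (hJ : r ≤ J.height) (hx : ∀ P ∈ J.minimalPrimes, P.height = r → x ∉ P) :
    (r + 1 : ℕ∞) ≤ (J ⊔ span {x}).height := by
  rw [height_eq_inf_minimalPrimes]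
  refine le_iInf₂ fun P hP => ?_
  have := hP.isPrime
  have hJP : J ≤ P := le_sup_left.trans hP.1.2
  rcases eq_top_or_lt_top P.height with htop | hfin
  · simp [htop]
  have : P.FiniteHeight := ⟨Or.inr hfin.ne⟩
  refine Order.add_one_le_of_lt (lt_of_le_of_ne (hJ.trans (height_mono hJP)) fun hr => ?_)
  exact hx P (mem_minimalPrimes_of_height_le hJP (hr ▸ hJ)) hr.symm
    (hP.1.2 (mem_sup_right (mem_span_singleton_self x)))

theorem exists_fg_le_and_le_height_of_le_height
    (hR : ∀ J : Ideal R, J.FG → J.minimalPrimes.Finite) (I : Ideal R) (r : ℕ)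
    (hr : r ≤ I.height) : ∃ J ≤ I, J.FG ∧ r ≤ J.height := by
  induction r with
  | zero => exact ⟨⊥, bot_le, Submodule.fg_bot, by simp⟩
  | succ r ih =>
    obtain ⟨J, hJI, hJ, hrJ⟩ := ih ((Nat.cast_le.mpr r.le_succ).trans hr)
    obtain ⟨x, hxI, hx⟩ := exists_mem_notMem_of_height_lt (I := I) (hR J hJ)
    refine ⟨J ⊔ span {x}, sup_le hJI (span_singleton_le_iff_mem _ |>.mpr hxI),
      Submodule.FG.sup hJ (Submodule.fg_span_singleton x), ?_⟩
    refine natCast_add_one_le_height_sup_span_singleton hrJ fun P hP hPr => hx P hP ?_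
    exact hPr ▸ (Nat.cast_lt.mpr r.lt_succ_self).trans_le hr

theorem height_eq_iSup_fg (hR : ∀ J : Ideal R, J.FG → J.minimalPrimes.Finite) (I : Ideal R) :
    I.height = ⨆ (J : Ideal R) (_ : J ≤ I) (_ : J.FG), J.height := by
  refine le_antisymm (ENat.forall_natCast_le_iff_le.mp fun r hr => ?_)
    (iSup₂_le fun J hJI => iSup_le fun _ => height_mono hJI)
  obtain ⟨J, hJI, hJ, hrJ⟩ := exists_fg_le_and_le_height_of_le_height hR I r hr
  exact hrJ.trans (le_iSup₂_of_le J hJI (le_iSup_of_le hJ le_rfl))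

end Ideal

theorem height_isIdealValuation_of_FGFC
    (R : Type*) [CommRing R] [IsDomain R]
    (hFGFC : ∀ I : Ideal R, I.FG → I.minimalPrimes.Finite) :
    IsIdealValuation R (idealHeight R) := by
  simp only [IsIdealValuation, idealHeight_eq_height]
  exact ⟨Ideal.height_bot, Ideal.height_top, Ideal.min_height_le_height_mul,
    Ideal.height_eq_iSup_fg hFGFC⟩
end
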